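/- Assume additionally ℙ(Z·G ≠ 0) > 0. Let 0 < δᵢ < δ, suppose λ̄(δ), λ̄(δᵢ) ∈ (τ, ∞) satisfy 𝔼[(Z/(λ̄(δ)−Z))²] = 1/δ and 𝔼[(Z/(λ̄(δᵢ)−Z))²] = 1/δᵢ, define ζ(λ; δᵢ) := ψ(max{λ, λ̄(δᵢ)}; δᵢ), and let λ* ∈ (τ, ∞) be the unique solution of ζ(λ; δᵢ) = φ(λ). Then the following are equivalent: (1) λ* > λ̄(δ); (2) ψ(λ̄(δ); δᵢ) < φ(λ̄(δ)); (3) ζ(λ*; δᵢ) > ζ(λ̄(δ); δᵢ); (4) 1/δ > 𝔼[(Z/(λ*−Z))²], i.e. ∂ψ/∂λ(λ*; δ) > 0. -/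

import Mathlib

open MeasureTheory ProbabilityTheory Real Set Filter

/-! Everything rests on the identity
`b · Z/(b−Z) − a · Z/(a−Z) = −(b−a) · Z²/((a−Z)(b−Z))`, valid a.s. for `a, b > τ`. Integrated
against `G²` it shows that `φ` strictly decreases on `(τ, ∞)`; integrated against `1` it gives
`ψ(b; Δ) − ψ(a; Δ) = (b−a) (1/Δ − 𝔼[Z²/((a−Z)(b−Z))])`, and since
`𝔼[Z²/((a−Z)(b−Z))] < 𝔼[(Z/(c−Z))²]` for `τ < c ≤ a < b`, `ψ(·; δᵢ)` strictly increases on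
`[λ̄(δᵢ), ∞)` and `m(λ) := 𝔼[(Z/(λ−Z))²]` strictly decreases. So `λ̄(δᵢ) < λ̄(δ)`, `ζ` is monotone,
and `λ*` is the crossing point of the monotone `ζ` with the strictly decreasing `φ`: a point lies
left of it iff `ζ < φ` there, which is (2), while (3) and (4) come from the monotonicity of `ζ`
and `m`. -/

theorem integral_lt_integral_of_ae_le_of_measure_pos {Ω : Type*} [MeasurableSpace Ω]
    {μ : Measure Ω} {f g : Ω → ℝ} (hf : Integrable f μ) (hg : Integrable g μ)
    (hle : f ≤ᵐ[μ] g) {s : Set Ω} (hs : 0 < μ s) (hlt : ∀ᵐ ω ∂μ, ω ∈ s → f ω < g ω) :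
    ∫ ω, f ω ∂μ < ∫ ω, g ω ∂μ := by
  rw [← sub_pos, ← integral_sub hg hf, integral_pos_iff_support_of_nonneg_ae
    (f := fun ω => g ω - f ω) (by filter_upwards [hle] with ω h using sub_nonneg.2 h)
    (hg.sub hf)]
  refine hs.trans_le (measure_mono_ae ?_)
  filter_upwards [hlt] with ω h hω
  exact sub_ne_zero.2 (h hω).ne'

theorem abs_div_sub_le {z τ C t : ℝ} (hzC : |z| ≤ C) (hzτ : z ≤ τ) (ht : τ < t) :
    |z / (t - z)| ≤ C / (t - τ) := by
  rw [abs_div, abs_of_pos (by linarith : 0 < t - z)]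
  exact div_le_div₀ ((abs_nonneg z).trans hzC) hzC (by linarith) (by linarith)

theorem mul_div_sub_sub_mul_div_sub {z w a b : ℝ} (ha : a - z ≠ 0) (hb : b - z ≠ 0) :
    b * (z * w / (b - z)) - a * (z * w / (a - z))
      = -(b - a) * (z ^ 2 * w / ((a - z) * (b - z))) := by
  field_simp
  ring

theorem sq_div_sub_mul_sub_lt_sq_div_sub {z τ a b c : ℝ} (hz : z ≠ 0) (hzτ : z ≤ τ)
    (hc : τ < c) (hca : c ≤ a) (hcb : c < b) :
    z ^ 2 / ((a - z) * (b - z)) < (z / (c - z)) ^ 2 := by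
  rw [div_pow]
  exact div_lt_div_of_pos_left (pow_pos (abs_pos.2 hz) 2 |>.trans_eq (sq_abs z))
    (by nlinarith) (by nlinarith)

section Resolvent

variable {Ω : Type*} [MeasurableSpace Ω] {μ : Measure Ω} {Z W : Ω → ℝ} {τ C : ℝ}

theorem integrable_div_sub_mul (hZ : AEMeasurable Z μ) (hZC : ∀ᵐ ω ∂μ, |Z ω| ≤ C)
    (hZτ : ∀ᵐ ω ∂μ, Z ω ≤ τ) (hW : Integrable W μ) {t : ℝ} (ht : τ < t) :
    Integrable (fun ω => Z ω / (t - Z ω) * W ω) μ :=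
  hW.bdd_mul (hZ.div (aemeasurable_const.sub hZ)).aestronglyMeasurable (by
    filter_upwards [hZC, hZτ] with ω h1 h2 using abs_div_sub_le h1 h2 ht)

theorem integrable_mul_div_sub (hZ : AEMeasurable Z μ) (hZC : ∀ᵐ ω ∂μ, |Z ω| ≤ C)
    (hZτ : ∀ᵐ ω ∂μ, Z ω ≤ τ) (hW : Integrable W μ) {t : ℝ} (ht : τ < t) :
    Integrable (fun ω => Z ω * W ω / (t - Z ω)) μ :=
  (integrable_div_sub_mul hZ hZC hZτ hW ht).congr (ae_of_all _ fun ω => by ring)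

theorem integrable_sq_mul_div_sub_mul_sub (hZ : AEMeasurable Z μ)
    (hZC : ∀ᵐ ω ∂μ, |Z ω| ≤ C) (hZτ : ∀ᵐ ω ∂μ, Z ω ≤ τ) (hW : Integrable W μ) {a b : ℝ}
    (ha : τ < a) (hb : τ < b) :
    Integrable (fun ω => Z ω ^ 2 * W ω / ((a - Z ω) * (b - Z ω))) μ :=
  (integrable_div_sub_mul hZ hZC hZτ (integrable_div_sub_mul hZ hZC hZτ hW hb) ha).congr
    (ae_of_all _ fun ω => by simp only [div_eq_mul_inv, mul_inv]; ring)

theorem mul_integral_mul_div_sub_sub_mul_integral (hZ : AEMeasurable Z μ)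
    (hZC : ∀ᵐ ω ∂μ, |Z ω| ≤ C) (hZτ : ∀ᵐ ω ∂μ, Z ω ≤ τ) (hW : Integrable W μ) {a b : ℝ}
    (ha : τ < a) (hb : τ < b) :
    b * ∫ ω, Z ω * W ω / (b - Z ω) ∂μ - a * ∫ ω, Z ω * W ω / (a - Z ω) ∂μ
      = -(b - a) * ∫ ω, Z ω ^ 2 * W ω / ((a - Z ω) * (b - Z ω)) ∂μ := by
  rw [← integral_const_mul, ← integral_const_mul, ← integral_const_mul, ← integral_sub
    ((integrable_mul_div_sub hZ hZC hZτ hW hb).const_mul b)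
    ((integrable_mul_div_sub hZ hZC hZτ hW ha).const_mul a)]
  refine integral_congr_ae ?_
  filter_upwards [hZτ] with ω h
  exact mul_div_sub_sub_mul_div_sub (by linarith) (by linarith)

theorem integral_sq_mul_div_sub_mul_sub_pos (hZ : AEMeasurable Z μ)
    (hZC : ∀ᵐ ω ∂μ, |Z ω| ≤ C) (hZτ : ∀ᵐ ω ∂μ, Z ω ≤ τ) (hW : Integrable W μ)
    (hW0 : 0 ≤ᵐ[μ] W) (hZW : 0 < μ {ω | Z ω * W ω ≠ 0}) {a b : ℝ} (ha : τ < a) (hb : τ < b) :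
    0 < ∫ ω, Z ω ^ 2 * W ω / ((a - Z ω) * (b - Z ω)) ∂μ := by
  have hpos : ∀ᵐ ω ∂μ, 0 < (a - Z ω) * (b - Z ω) := by
    filter_upwards [hZτ] with ω h
    exact mul_pos (by linarith) (by linarith)
  rw [integral_pos_iff_support_of_nonneg_ae
    (by filter_upwards [hW0, hpos] with ω h1 h2
          using div_nonneg (mul_nonneg (sq_nonneg _) h1) h2.le)
    (integrable_sq_mul_div_sub_mul_sub hZ hZC hZτ hW ha hb)]
  refine hZW.trans_le (measure_mono_ae ?_)
  filter_upwards [hpos] with ω h hω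
  have hZW : Z ω * W ω ≠ 0 := hω
  show Z ω ^ 2 * W ω / _ ≠ 0
  rw [sq, mul_assoc]
  exact div_ne_zero (mul_ne_zero (left_ne_zero_of_mul hZW) hZW) h.ne'

theorem strictAntiOn_mul_integral_mul_div_sub (hZ : AEMeasurable Z μ)
    (hZC : ∀ᵐ ω ∂μ, |Z ω| ≤ C) (hZτ : ∀ᵐ ω ∂μ, Z ω ≤ τ) (hW : Integrable W μ)
    (hW0 : 0 ≤ᵐ[μ] W) (hZW : 0 < μ {ω | Z ω * W ω ≠ 0}) :
    StrictAntiOn (fun t => t * ∫ ω, Z ω * W ω / (t - Z ω) ∂μ) (Ioi τ) := by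
  intro a ha b hb hab
  have hdiff := mul_integral_mul_div_sub_sub_mul_integral hZ hZC hZτ hW ha hb
  have hpos := integral_sq_mul_div_sub_mul_sub_pos hZ hZC hZτ hW hW0 hZW ha hb
  nlinarith

variable [IsFiniteMeasure μ]

theorem integral_sq_div_sub_mul_sub_lt (hZ : AEMeasurable Z μ) (hZC : ∀ᵐ ω ∂μ, |Z ω| ≤ C)
    (hZτ : ∀ᵐ ω ∂μ, Z ω ≤ τ) (hZ0 : 0 < μ {ω | Z ω ≠ 0}) {a b c : ℝ} (hc : τ < c)
    (hca : c ≤ a) (hcb : c < b) :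
    ∫ ω, Z ω ^ 2 / ((a - Z ω) * (b - Z ω)) ∂μ < ∫ ω, (Z ω / (c - Z ω)) ^ 2 ∂μ := by
  have hint : ∀ a b : ℝ, τ < a → τ < b →
      Integrable (fun ω => Z ω ^ 2 / ((a - Z ω) * (b - Z ω))) μ := fun a b ha hb => by
    simpa using integrable_sq_mul_div_sub_mul_sub hZ hZC hZτ (integrable_const (1 : ℝ)) ha hb
  refine integral_lt_integral_of_ae_le_of_measure_pos
    (hint a b (hc.trans_le hca) (hc.trans hcb))
    ((hint c c hc hc).congr (ae_of_all _ fun ω => by simp only [div_eq_mul_inv, mul_inv]; ring))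
    ?_ hZ0 ?_
  · filter_upwards [hZτ] with ω h
    rcases eq_or_ne (Z ω) 0 with h0 | h0
    · simp [h0]
    · exact (sq_div_sub_mul_sub_lt_sq_div_sub h0 h hc hca hcb).le
  · filter_upwards [hZτ] with ω h h0
    exact sq_div_sub_mul_sub_lt_sq_div_sub h0 h hc hca hcb

theorem strictAntiOn_integral_sq_div_sub (hZ : AEMeasurable Z μ) (hZC : ∀ᵐ ω ∂μ, |Z ω| ≤ C)
    (hZτ : ∀ᵐ ω ∂μ, Z ω ≤ τ) (hZ0 : 0 < μ {ω | Z ω ≠ 0}) :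
    StrictAntiOn (fun t => ∫ ω, (Z ω / (t - Z ω)) ^ 2 ∂μ) (Ioi τ) := by
  intro a ha b _ hab
  calc ∫ ω, (Z ω / (b - Z ω)) ^ 2 ∂μ = ∫ ω, Z ω ^ 2 / ((b - Z ω) * (b - Z ω)) ∂μ := by
        simp only [div_pow, sq (b - _)]
    _ < ∫ ω, (Z ω / (a - Z ω)) ^ 2 ∂μ := integral_sq_div_sub_mul_sub_lt hZ hZC hZτ hZ0 ha hab.le hab

theorem strictMonoOn_mul_add_integral_div_sub (hZ : AEMeasurable Z μ)
    (hZC : ∀ᵐ ω ∂μ, |Z ω| ≤ C) (hZτ : ∀ᵐ ω ∂μ, Z ω ≤ τ) (hZ0 : 0 < μ {ω | Z ω ≠ 0})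
    {c s : ℝ} (hc : τ < c) (hs : ∫ ω, (Z ω / (c - Z ω)) ^ 2 ∂μ ≤ s) :
    StrictMonoOn (fun t => t * (s + ∫ ω, Z ω / (t - Z ω) ∂μ)) (Ici c) := by
  intro a (ha : c ≤ a) b (hb : c ≤ b) hab
  have hdiff := mul_integral_mul_div_sub_sub_mul_integral hZ hZC hZτ (integrable_const (1 : ℝ))
    (hc.trans_le ha) (hc.trans_le hb)
  simp only [mul_one] at hdiff
  have hlt := integral_sq_div_sub_mul_sub_lt hZ hZC hZτ hZ0 hc ha (ha.trans_lt hab)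
  nlinarith

end Resolvent

theorem lt_iff_lt_of_monotone_of_strictAntiOn {α β : Type*} [LinearOrder α] [LinearOrder β]
    {f g : α → β} {s : Set α} (hf : Monotone f) (hg : StrictAntiOn g s) {x y : α}
    (hx : x ∈ s) (hy : y ∈ s) (hfg : f y = g y) :
    x < y ↔ f x < g x := by
  refine ⟨fun h => (hf h.le).trans_lt (hfg ▸ hg hx hy h), fun h => ?_⟩
  by_contra! hyx
  exact (hg.antitoneOn hy hx hyx).not_gt (hfg ▸ (hf hyx).trans_lt h)

theorem Monotone.comp_max_of_monotoneOn {α β : Type*} [LinearOrder α] [Preorder β]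
    {f : α → β} {c : α} (hf : MonotoneOn f (Ici c)) : Monotone fun x => f (max x c) :=
  fun _ _ h => hf le_sup_right le_sup_right (max_le_max_right c h)

theorem integrable_sq_of_map_eq_gaussianReal {Ω : Type*} [MeasurableSpace Ω] {μ : Measure Ω}
    {G : Ω → ℝ} (hG : AEMeasurable G μ) {m : ℝ} {v : NNReal}
    (hmap : μ.map G = gaussianReal m v) : Integrable (fun ω => G ω ^ 2) μ :=
  ((memLp_map_measure_iff aestronglyMeasurable_id hG).1
    (hmap ▸ memLp_id_gaussianReal' 2 (by norm_num))).integrable_sq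

theorem spectral_threshold_equiv_general
    {Ω : Type*} [MeasureSpace Ω] [IsProbabilityMeasure (ℙ : Measure Ω)]
    (G Z : Ω → ℝ) (hGmeas : Measurable G) (hZmeas : Measurable Z)
    (hG : Measure.map G ℙ = gaussianReal 0 1)
    (hZbdd : ∃ C : ℝ, ∀ᵐ ω ∂ℙ, |Z ω| ≤ C)
    (τ : ℝ) (hτ : τ = essSup Z ℙ)
    (hZG : 0 < ℙ {ω | Z ω * G ω ≠ 0})
    (φ : ℝ → ℝ) (ψ : ℝ → ℝ → ℝ)
    (hφ : ∀ lam : ℝ, φ lam = lam * ∫ ω, Z ω * (G ω) ^ 2 / (lam - Z ω) ∂ℙ)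
    (hψ : ∀ (lam Δ : ℝ), ψ lam Δ = lam * (1 / Δ + ∫ ω, Z ω / (lam - Z ω) ∂ℙ))
    (δ δᵢ : ℝ) (hδᵢ : 0 < δᵢ) (hδ : δᵢ < δ)
    (lamBarδ lamBarδᵢ : ℝ)
    (hlamBarδ : lamBarδ ∈ Set.Ioi τ) (hlamBarδᵢ : lamBarδᵢ ∈ Set.Ioi τ)
    (hstatδ : ∫ ω, (Z ω / (lamBarδ - Z ω)) ^ 2 ∂ℙ = 1 / δ)
    (hstatδᵢ : ∫ ω, (Z ω / (lamBarδᵢ - Z ω)) ^ 2 ∂ℙ = 1 / δᵢ)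
    (ζ : ℝ → ℝ) (hζ : ∀ lam : ℝ, ζ lam = ψ (max lam lamBarδᵢ) δᵢ)
    (lamStar : ℝ) (hlamStar : lamStar ∈ Set.Ioi τ)
    (hsol : ζ lamStar = φ lamStar) :
    ((lamBarδ < lamStar) ↔ (ψ lamBarδ δᵢ < φ lamBarδ)) ∧
    ((lamBarδ < lamStar) ↔ (ζ lamBarδ < ζ lamStar)) ∧
    ((lamBarδ < lamStar) ↔ (∫ ω, (Z ω / (lamStar - Z ω)) ^ 2 ∂ℙ) < 1 / δ) := by
  obtain ⟨C, hC⟩ := hZbdd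
  have hZτ : ∀ᵐ ω ∂ℙ, Z ω ≤ τ := hτ ▸ ae_le_essSup ⟨C, by
    rw [eventually_map]; filter_upwards [hC] with ω h using (abs_le.mp h).2⟩
  have hZ : AEMeasurable Z ℙ := hZmeas.aemeasurable
  have hZ0 : 0 < ℙ {ω | Z ω ≠ 0} := hZG.trans_le (measure_mono fun ω => left_ne_zero_of_mul)
  have hm := strictAntiOn_integral_sq_div_sub hZ hC hZτ hZ0
  have hφ_anti : StrictAntiOn φ (Ioi τ) := by
    simpa only [← hφ] using strictAntiOn_mul_integral_mul_div_sub hZ hC hZτ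
      (integrable_sq_of_map_eq_gaussianReal hGmeas.aemeasurable hG)
      (ae_of_all _ fun ω => sq_nonneg (G ω)) (hZG.trans_le (measure_mono fun ω h => by
        simpa only [mem_ofPred_eq, mul_ne_zero_iff, pow_ne_zero_iff two_ne_zero] using h))
  have hψ_mono : StrictMonoOn (ψ · δᵢ) (Ici lamBarδᵢ) := by
    simpa only [← hψ] using strictMonoOn_mul_add_integral_div_sub hZ hC hZτ hZ0 hlamBarδᵢ hstatδᵢ.le
  have hbar : lamBarδᵢ < lamBarδ := (hm.lt_iff_gt hlamBarδ hlamBarδᵢ).1 <| by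
    rw [hstatδ, hstatδᵢ]; exact one_div_lt_one_div_of_lt hδᵢ hδ
  have hζ_mono : Monotone ζ := funext hζ ▸ Monotone.comp_max_of_monotoneOn hψ_mono.monotoneOn
  have hζ_bar : ζ lamBarδ = ψ lamBarδ δᵢ := by rw [hζ, max_eq_left hbar.le]
  refine ⟨hζ_bar ▸ lt_iff_lt_of_monotone_of_strictAntiOn hζ_mono hφ_anti hlamBarδ hlamStar hsol,
    ⟨fun h => ?_, hζ_mono.reflect_lt⟩, hstatδ ▸ (hm.lt_iff_gt hlamStar hlamBarδ).symm⟩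
  rw [hζ, hζ, max_eq_left hbar.le, max_eq_left (hbar.trans h).le]
  exact hψ_mono hbar.le (hbar.trans h).le h

/-- Equivalent characterizations of the spectral threshold: with `0 < δᵢ < δ`, the
stationary points `λ̄(δ), λ̄(δᵢ)`, `ζ(λ;δᵢ) = ψ(max{λ, λ̄(δᵢ)};δᵢ)`, and `λ*` the unique
solution of `ζ(λ;δᵢ) = φ(λ)` on `(τ,∞)`, the following are equivalent:
(1) `λ* > λ̄(δ)`; (2) `ψ(λ̄(δ);δᵢ) < φ(λ̄(δ))`; (3) `ζ(λ*;δᵢ) > ζ(λ̄(δ);δᵢ)`;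
(4) `1/δ > 𝔼[(Z/(λ*−Z))²]`. -/
theorem spectral_threshold_equiv
    {Ω : Type*} [MeasureSpace Ω] [IsProbabilityMeasure (ℙ : Measure Ω)]
    (G Z : Ω → ℝ) (hGmeas : Measurable G) (hZmeas : Measurable Z)
    (hG : Measure.map G ℙ = gaussianReal 0 1)
    (hZbdd : ∃ C : ℝ, ∀ᵐ ω ∂ℙ, |Z ω| ≤ C)
    (τ : ℝ) (hτ : τ = essSup Z ℙ) (hτpos : 0 < τ)
    (hZ0 : ℙ {ω | Z ω = 0} < 1)
    (hZG : 0 < ℙ {ω | Z ω * G ω ≠ 0})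
    (φ : ℝ → ℝ) (ψ : ℝ → ℝ → ℝ)
    (hφ : ∀ lam : ℝ, φ lam = lam * ∫ ω, Z ω * (G ω) ^ 2 / (lam - Z ω) ∂ℙ)
    (hψ : ∀ (lam Δ : ℝ), ψ lam Δ = lam * (1 / Δ + ∫ ω, Z ω / (lam - Z ω) ∂ℙ))
    (δ δᵢ : ℝ) (hδᵢ : 0 < δᵢ) (hδ : δᵢ < δ)
    (lamBarδ lamBarδᵢ : ℝ)
    (hlamBarδ : lamBarδ ∈ Set.Ioi τ) (hlamBarδᵢ : lamBarδᵢ ∈ Set.Ioi τ)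
    (hstatδ : ∫ ω, (Z ω / (lamBarδ - Z ω)) ^ 2 ∂ℙ = 1 / δ)
    (hstatδᵢ : ∫ ω, (Z ω / (lamBarδᵢ - Z ω)) ^ 2 ∂ℙ = 1 / δᵢ)
    (ζ : ℝ → ℝ) (hζ : ∀ lam : ℝ, ζ lam = ψ (max lam lamBarδᵢ) δᵢ)
    (lamStar : ℝ) (hlamStar : lamStar ∈ Set.Ioi τ)
    (hsol : ζ lamStar = φ lamStar)
    (huniq : ∀ lam ∈ Set.Ioi τ, ζ lam = φ lam → lam = lamStar) :
    ((lamBarδ < lamStar) ↔ (ψ lamBarδ δᵢ < φ lamBarδ)) ∧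
    ((lamBarδ < lamStar) ↔ (ζ lamBarδ < ζ lamStar)) ∧
    ((lamBarδ < lamStar) ↔ (∫ ω, (Z ω / (lamStar - Z ω)) ^ 2 ∂ℙ) < 1 / δ) :=
  spectral_threshold_equiv_general G Z hGmeas hZmeas hG hZbdd τ hτ hZG φ ψ hφ hψ δ δᵢ hδᵢ hδ lamBarδ
    lamBarδᵢ hlamBarδ hlamBarδᵢ hstatδ hstatδᵢ ζ hζ lamStar hlamStar hsol
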